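/- arXiv:0810.3398 — 4 statements merged into one kernel-verified Lean document; each statement's English description precedes it below -/
import Mathlib

section
/- Let $\mathcal{M}$ be the set of monotone nondecreasing, left-continuous functions $u:\mathbb{R}\to[0,1]$. Let $Q_0:\mathcal{M}\to\mathcal{M}$ satisfy: (i) if $u_k\to u$ uniformly on every bounded interval with $u_k,u\in\mathcal{M}$, then $Q_0[u_k]\to Q_0[u]$ almost everywhere; (ii) $u_1\le u_2$ implies $Q_0[u_1]\le Q_0[u_2]$; (iii) $Q_0$ commutes with all translations $T_{x_0}[u](\cdot)=u(\cdot-x_0)$. Then, if a sequence $\{u_k\}\subset\mathcal{M}$ converges to $u\in\mathcal{M}$ almost everywhere, $\lim_{k\to\infty}(Q_0[u_k])(x)=(Q_0[u])(x)$ holds for every continuous point $x$ of $Q_0[u]$. -/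
open MeasureTheory Filter Topology

/-- `MemM u` : `u` is monotone nondecreasing, left continuous, with values in `[0,1]`. -/
def MemM (u : ℝ → ℝ) : Prop :=
  Monotone u ∧ (∀ x : ℝ, Tendsto u (nhdsWithin x (Set.Iio x)) (nhds (u x))) ∧
    ∀ x : ℝ, u x ∈ Set.Icc (0:ℝ) 1

/-! Fix `δ > 0`. Since the `u_k` are monotone and converge on a dense set, eventually
`u_k ≤ u(· + δ) + ε` on every half line `(-∞, b]`. Raising `u(· + δ) + 1/(n+1)` to `1` beyond `n`
gives functions `v_n ∈ M` that dominate `u_k` for large `k` and converge to `u(· + δ)` uniformly on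
bounded intervals, so `Q₀[v_n](y) → Q₀[u](y + δ)` for almost every `y`. For such a `y` in
`(x, x + δ)`, monotonicity of `Q₀` and of `Q₀[v_n]` gives `Q₀[u_k](x) ≤ Q₀[v_n](x) ≤ Q₀[v_n](y)`,
which is close to `Q₀[u](y + δ)` and hence, by continuity, to `Q₀[u](x)`. The lower bound is
symmetric. -/

open Set

theorem Dense.exists_finite_subset_forall_mem_Ioo {S : Set ℝ} (hS : Dense S) {δ : ℝ}
    (hδ : 0 < δ) {K : Set ℝ} (hK : IsCompact K) :
    ∃ T ⊆ S, T.Finite ∧ ∀ y ∈ K, ∃ s ∈ T, y < s ∧ s < y + δ := by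
  have hcover : K ⊆ ⋃ s ∈ S, Ioo (s - δ) s := fun y _ => by
    obtain ⟨s, hsS, hs⟩ := hS.exists_between (lt_add_of_pos_right y hδ)
    exact mem_iUnion₂.2 ⟨s, hsS, by linarith [hs.2], hs.1⟩
  obtain ⟨T, hTS, hT, hKT⟩ := hK.elim_finite_subcover_image (fun _ _ => isOpen_Ioo) hcover
  refine ⟨T, hTS, hT, fun y hy => ?_⟩
  obtain ⟨s, hsT, hys⟩ := mem_iUnion₂.1 (hKT hy)
  exact ⟨s, hsT, hys.2, by linarith [hys.1]⟩

theorem eventually_le_comp_add_add_of_tendsto_on_dense {u : ℝ → ℝ} {uk : ℕ → ℝ → ℝ}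
    {S : Set ℝ} {m : ℝ} (hu : Monotone u) (hm : ∀ y, m ≤ u y) (huk : ∀ k, Monotone (uk k))
    (hS : Dense S) (hconv : ∀ s ∈ S, Tendsto (fun k => uk k s) atTop (𝓝 (u s)))
    {δ ε : ℝ} (hδ : 0 < δ) (hε : 0 < ε) (b : ℝ) :
    ∀ᶠ k in atTop, ∀ y ≤ b, uk k y ≤ u (y + δ) + ε := by
  have hbdd : BddBelow (range u) := ⟨m, forall_mem_range.2 hm⟩
  obtain ⟨z, hz⟩ := exists_lt_of_ciInf_lt (lt_add_of_pos_right (⨅ y, u y) (half_pos hε))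
  obtain ⟨s₀, hs₀S, hs₀⟩ := hS.exists_between (sub_lt_self z hδ)
  obtain ⟨T, hTS, hT, hcover⟩ :=
    hS.exists_finite_subset_forall_mem_Ioo hδ (isCompact_Icc (a := z - δ) (b := b))
  have hclose : ∀ s ∈ S, ∀ᶠ k in atTop, uk k s < u s + ε / 2 := fun s hs =>
    (hconv s hs).eventually (eventually_lt_nhds (lt_add_of_pos_right _ (half_pos hε)))
  filter_upwards [hclose s₀ hs₀S, hT.eventually_all.2 fun s hs => hclose s (hTS hs)]
    with k hk₀ hkT y hyb
  rcases le_or_gt y (z - δ) with hyz | hzy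
  · have h₁ : uk k y ≤ uk k s₀ := huk k (hyz.trans hs₀.1.le)
    have h₂ : u s₀ ≤ u z := hu hs₀.2.le
    have h₃ : ⨅ y, u y ≤ u (y + δ) := ciInf_le hbdd _
    linarith
  · obtain ⟨s, hsT, hys, hsy⟩ := hcover y ⟨hzy.le, hyb⟩
    have h₁ : uk k y ≤ uk k s := huk k hys.le
    have h₂ : u s ≤ u (y + δ) := hu hsy.le
    linarith [hkT s hsT]

theorem eventually_comp_sub_sub_le_of_tendsto_on_dense {u : ℝ → ℝ} {uk : ℕ → ℝ → ℝ}
    {S : Set ℝ} {M : ℝ} (hu : Monotone u) (hM : ∀ y, u y ≤ M) (huk : ∀ k, Monotone (uk k))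
    (hS : Dense S) (hconv : ∀ s ∈ S, Tendsto (fun k => uk k s) atTop (𝓝 (u s)))
    {δ ε : ℝ} (hδ : 0 < δ) (hε : 0 < ε) (a : ℝ) :
    ∀ᶠ k in atTop, ∀ y ≥ a, u (y - δ) - ε ≤ uk k y := by
  have hreflect := eventually_le_comp_add_add_of_tendsto_on_dense (u := fun y => -u (-y))
    (uk := fun k y => -uk k (-y)) (S := Neg.neg ⁻¹' S) (m := -M)
    (fun y y' h => neg_le_neg (hu (neg_le_neg h))) (fun y => neg_le_neg (hM _))
    (fun k y y' h => neg_le_neg (huk k (neg_le_neg h))) (hS.preimage (Homeomorph.neg ℝ).isOpenMap)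
    (fun s hs => (hconv (-s) hs).neg) hδ hε (-a)
  filter_upwards [hreflect] with k hk y hya
  have hky := hk (-y) (neg_le_neg hya)
  rw [neg_add, neg_neg, ← sub_eq_add_neg] at hky
  linarith

theorem MemM.comp_add {u : ℝ → ℝ} (hu : MemM u) (c : ℝ) : MemM (fun y => u (y + c)) :=
  ⟨hu.1.comp (monotone_id.add_const c),
    fun p => ContinuousWithinAt.comp (t := Iio (p + c)) (hu.2.1 (p + c))
      (continuous_add_const c).continuousWithinAt fun _ hy => by simpa using hy,
    fun y => hu.2.2 (y + c)⟩

theorem MemM.comp_sub {u : ℝ → ℝ} (hu : MemM u) (c : ℝ) : MemM (fun y => u (y - c)) := by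
  simpa only [sub_eq_add_neg] using hu.comp_add (-c)

noncomputable def upperApprox (g : ℝ → ℝ) (n : ℕ) (y : ℝ) : ℝ :=
  min (g y + 1 / (n + 1) + max 0 (y - n)) 1

noncomputable def lowerApprox (g : ℝ → ℝ) (n : ℕ) (y : ℝ) : ℝ :=
  max (g y - 1 / (n + 1) - max 0 (-n - y)) 0

theorem MemM.upperApprox {g : ℝ → ℝ} (hg : MemM g) (n : ℕ) : MemM (upperApprox g n) := by
  refine ⟨?_, fun p => ?_, fun y => ⟨?_, min_le_right _ _⟩⟩
  · intro y y' h
    unfold _root_.upperApprox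
    gcongr
    exact hg.1 h
  · exact (((hg.2.1 p).add continuousWithinAt_const).add
      (by fun_prop : Continuous fun y : ℝ => max 0 (y - n)).continuousWithinAt).min
      continuousWithinAt_const
  · have hg0 := (hg.2.2 y).1
    exact le_min (by positivity) zero_le_one

theorem MemM.lowerApprox {g : ℝ → ℝ} (hg : MemM g) (n : ℕ) : MemM (lowerApprox g n) := by
  refine ⟨?_, fun p => ?_, fun y => ⟨le_max_right _ _, ?_⟩⟩
  · intro y y' h
    unfold _root_.lowerApprox
    gcongr
    exact hg.1 h
  · exact (((hg.2.1 p).sub continuousWithinAt_const).sub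
      (by fun_prop : Continuous fun y : ℝ => max 0 (-n - y)).continuousWithinAt).max
      continuousWithinAt_const
  · have hg1 := (hg.2.2 y).2
    have hcut : 0 ≤ max 0 (-n - y) := le_max_left _ _
    have hpos : (0:ℝ) ≤ 1 / (n + 1) := by positivity
    exact max_le (by linarith) zero_le_one

theorem tendstoUniformlyOn_upperApprox {g : ℝ → ℝ} (hg : ∀ y, g y ≤ 1) (a b : ℝ) :
    TendstoUniformlyOn (upperApprox g) g atTop (Icc a b) := by
  rw [Metric.tendstoUniformlyOn_iff]
  intro ε hε
  filter_upwards [tendsto_one_div_add_atTop_nhds_zero_nat.eventually (eventually_lt_nhds hε),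
    tendsto_natCast_atTop_atTop.eventually_ge_atTop b] with n hnε hbn y hy
  have hcut : max 0 (y - n) = 0 := max_eq_left (by linarith [hy.2])
  have hpos : (0:ℝ) < 1 / (n + 1) := by positivity
  rw [upperApprox, hcut, add_zero, Real.dist_eq, abs_lt]
  constructor <;> rcases min_cases (g y + 1 / (n + 1)) 1 with h | h <;> linarith [hg y]

theorem tendstoUniformlyOn_lowerApprox {g : ℝ → ℝ} (hg : ∀ y, 0 ≤ g y) (a b : ℝ) :
    TendstoUniformlyOn (lowerApprox g) g atTop (Icc a b) := by
  rw [Metric.tendstoUniformlyOn_iff]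
  intro ε hε
  filter_upwards [tendsto_one_div_add_atTop_nhds_zero_nat.eventually (eventually_lt_nhds hε),
    tendsto_natCast_atTop_atTop.eventually_ge_atTop (-a)] with n hnε han y hy
  have hcut : max 0 (-n - y) = 0 := max_eq_left (by linarith [hy.1])
  have hpos : (0:ℝ) < 1 / (n + 1) := by positivity
  rw [lowerApprox, hcut, sub_zero, Real.dist_eq, abs_lt]
  constructor <;> rcases max_cases (g y - 1 / (n + 1)) 0 with h | h <;> linarith [hg y]

theorem eventually_le_upperApprox {uk : ℕ → ℝ → ℝ} {u : ℝ → ℝ} (huk : ∀ k, MemM (uk k))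
    (hu : MemM u) (hae : ∀ᵐ y, Tendsto (fun k => uk k y) atTop (𝓝 (u y))) {δ : ℝ}
    (hδ : 0 < δ) (n : ℕ) :
    ∀ᶠ k in atTop, ∀ y, uk k y ≤ upperApprox (fun y => u (y + δ)) n y := by
  have hpos : (0:ℝ) < 1 / (n + 1) := by positivity
  filter_upwards [eventually_le_comp_add_add_of_tendsto_on_dense hu.1 (fun y => (hu.2.2 y).1)
    (fun k => (huk k).1) (Measure.dense_of_ae hae) (fun _ hs => hs) hδ hpos (n + 1)] with k hk y
  refine le_min ?_ ((huk k).2.2 y).2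
  rcases le_or_gt y (n + 1) with hy | hy
  · linarith [hk y hy, le_max_left 0 (y - n)]
  · linarith [le_max_right 0 (y - n), ((huk k).2.2 y).2, (hu.2.2 (y + δ)).1]

theorem eventually_lowerApprox_le {uk : ℕ → ℝ → ℝ} {u : ℝ → ℝ} (huk : ∀ k, MemM (uk k))
    (hu : MemM u) (hae : ∀ᵐ y, Tendsto (fun k => uk k y) atTop (𝓝 (u y))) {δ : ℝ}
    (hδ : 0 < δ) (n : ℕ) :
    ∀ᶠ k in atTop, ∀ y, lowerApprox (fun y => u (y - δ)) n y ≤ uk k y := by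
  have hpos : (0:ℝ) < 1 / (n + 1) := by positivity
  filter_upwards [eventually_comp_sub_sub_le_of_tendsto_on_dense hu.1 (fun y => (hu.2.2 y).2)
    (fun k => (huk k).1) (Measure.dense_of_ae hae) (fun _ hs => hs) hδ hpos (-n - 1)] with k hk y
  refine max_le ?_ ((huk k).2.2 y).1
  rcases le_or_gt (-n - 1 : ℝ) y with hy | hy
  · linarith [hk y hy, le_max_left 0 (-n - y)]
  · linarith [le_max_right 0 (-n - y), ((huk k).2.2 y).1, (hu.2.2 (y - δ)).2]

theorem eventually_apply_lt_of_le_of_tendsto {Q0 : (ℝ → ℝ) → ℝ → ℝ}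
    (hmap : ∀ u, MemM u → MemM (Q0 u))
    (hord : ∀ u v, MemM u → MemM v → (∀ x, u x ≤ v x) → ∀ x, Q0 u x ≤ Q0 v x)
    {uk v : ℕ → ℝ → ℝ} (huk : ∀ k, MemM (uk k)) (hv : ∀ n, MemM (v n))
    (hdom : ∀ n, ∀ᶠ k in atTop, ∀ y, uk k y ≤ v n y) {x y L c : ℝ} (hxy : x ≤ y)
    (hlim : Tendsto (fun n => Q0 (v n) y) atTop (𝓝 L)) (hL : L < c) :
    ∀ᶠ k in atTop, Q0 (uk k) x < c := by
  obtain ⟨n, hn⟩ := (hlim.eventually (eventually_lt_nhds hL)).exists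
  filter_upwards [hdom n] with k hk
  calc Q0 (uk k) x ≤ Q0 (v n) x := hord _ _ (huk k) (hv n) hk x
    _ ≤ Q0 (v n) y := (hmap _ (hv n)).1 hxy
    _ < c := hn

theorem eventually_lt_apply_of_le_of_tendsto {Q0 : (ℝ → ℝ) → ℝ → ℝ}
    (hmap : ∀ u, MemM u → MemM (Q0 u))
    (hord : ∀ u v, MemM u → MemM v → (∀ x, u x ≤ v x) → ∀ x, Q0 u x ≤ Q0 v x)
    {uk w : ℕ → ℝ → ℝ} (huk : ∀ k, MemM (uk k)) (hw : ∀ n, MemM (w n))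
    (hdom : ∀ n, ∀ᶠ k in atTop, ∀ y, w n y ≤ uk k y) {x y L c : ℝ} (hyx : y ≤ x)
    (hlim : Tendsto (fun n => Q0 (w n) y) atTop (𝓝 L)) (hL : c < L) :
    ∀ᶠ k in atTop, c < Q0 (uk k) x := by
  obtain ⟨n, hn⟩ := (hlim.eventually (eventually_gt_nhds hL)).exists
  filter_upwards [hdom n] with k hk
  calc c < Q0 (w n) y := hn
    _ ≤ Q0 (w n) x := (hmap _ (hw n)).1 hyx
    _ ≤ Q0 (uk k) x := hord _ _ (hw n) (huk k) hk x

theorem eventually_apply_lt_of_continuousAt {Q0 : (ℝ → ℝ) → ℝ → ℝ}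
    (hmap : ∀ u, MemM u → MemM (Q0 u))
    (hcont : ∀ (uk : ℕ → ℝ → ℝ) (u : ℝ → ℝ), (∀ k, MemM (uk k)) → MemM u →
      (∀ a b : ℝ, TendstoUniformlyOn (fun k => uk k) u atTop (Icc a b)) →
      ∀ᵐ x : ℝ, Tendsto (fun k => Q0 (uk k) x) atTop (𝓝 (Q0 u x)))
    (hord : ∀ u v, MemM u → MemM v → (∀ x, u x ≤ v x) → ∀ x, Q0 u x ≤ Q0 v x)
    (htrans : ∀ (c : ℝ) (u : ℝ → ℝ), MemM u → ∀ x, Q0 (fun y => u (y - c)) x = Q0 u (x - c))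
    {uk : ℕ → ℝ → ℝ} {u : ℝ → ℝ} (huk : ∀ k, MemM (uk k)) (hu : MemM u)
    (hae : ∀ᵐ y, Tendsto (fun k => uk k y) atTop (𝓝 (u y))) {x c : ℝ}
    (hx : ContinuousAt (Q0 u) x) (hc : Q0 u x < c) :
    ∀ᶠ k in atTop, Q0 (uk k) x < c := by
  obtain ⟨η, hη, hball⟩ := Metric.eventually_nhds_iff.1 (hx.eventually (eventually_lt_nhds hc))
  have hη₂ : 0 < η / 2 := half_pos hη
  have hg := hu.comp_add (η / 2)
  have hlim : ∀ᵐ y, Tendsto (fun n => Q0 (upperApprox (fun y => u (y + η / 2)) n) y) atTop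
      (𝓝 (Q0 u (y + η / 2))) := by
    filter_upwards [hcont _ _ hg.upperApprox hg
      (tendstoUniformlyOn_upperApprox fun y => (hg.2.2 y).2)] with y hy
    have hshift := htrans (-(η / 2)) u hu y
    simp only [sub_neg_eq_add] at hshift
    rwa [← hshift]
  obtain ⟨y, hy, hxy⟩ := (Measure.dense_of_ae hlim).exists_between (lt_add_of_pos_right x hη₂)
  refine eventually_apply_lt_of_le_of_tendsto hmap hord huk hg.upperApprox
    (eventually_le_upperApprox huk hu hae hη₂) hxy.1.le hy (hball ?_)
  rw [Real.dist_eq, abs_lt]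
  constructor <;> linarith [hxy.1, hxy.2]

theorem eventually_lt_apply_of_continuousAt {Q0 : (ℝ → ℝ) → ℝ → ℝ}
    (hmap : ∀ u, MemM u → MemM (Q0 u))
    (hcont : ∀ (uk : ℕ → ℝ → ℝ) (u : ℝ → ℝ), (∀ k, MemM (uk k)) → MemM u →
      (∀ a b : ℝ, TendstoUniformlyOn (fun k => uk k) u atTop (Icc a b)) →
      ∀ᵐ x : ℝ, Tendsto (fun k => Q0 (uk k) x) atTop (𝓝 (Q0 u x)))
    (hord : ∀ u v, MemM u → MemM v → (∀ x, u x ≤ v x) → ∀ x, Q0 u x ≤ Q0 v x)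
    (htrans : ∀ (c : ℝ) (u : ℝ → ℝ), MemM u → ∀ x, Q0 (fun y => u (y - c)) x = Q0 u (x - c))
    {uk : ℕ → ℝ → ℝ} {u : ℝ → ℝ} (huk : ∀ k, MemM (uk k)) (hu : MemM u)
    (hae : ∀ᵐ y, Tendsto (fun k => uk k y) atTop (𝓝 (u y))) {x c : ℝ}
    (hx : ContinuousAt (Q0 u) x) (hc : c < Q0 u x) :
    ∀ᶠ k in atTop, c < Q0 (uk k) x := by
  obtain ⟨η, hη, hball⟩ := Metric.eventually_nhds_iff.1 (hx.eventually (eventually_gt_nhds hc))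
  have hη₂ : 0 < η / 2 := half_pos hη
  have hg := hu.comp_sub (η / 2)
  have hlim : ∀ᵐ y, Tendsto (fun n => Q0 (lowerApprox (fun y => u (y - η / 2)) n) y) atTop
      (𝓝 (Q0 u (y - η / 2))) := by
    filter_upwards [hcont _ _ hg.lowerApprox hg
      (tendstoUniformlyOn_lowerApprox fun y => (hg.2.2 y).1)] with y hy
    rwa [← htrans (η / 2) u hu y]
  obtain ⟨y, hy, hyx⟩ := (Measure.dense_of_ae hlim).exists_between (sub_lt_self x hη₂)
  refine eventually_lt_apply_of_le_of_tendsto hmap hord huk hg.lowerApprox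
    (eventually_lowerApprox_le huk hu hae hη₂) hyx.2.le hy (hball ?_)
  rw [Real.dist_eq, abs_lt]
  constructor <;> linarith [hyx.1, hyx.2]

theorem stmt1 (Q0 : (ℝ → ℝ) → (ℝ → ℝ))
    (hmap : ∀ u, MemM u → MemM (Q0 u))
    (hcont : ∀ (uk : ℕ → ℝ → ℝ) (u : ℝ → ℝ), (∀ k, MemM (uk k)) → MemM u →
      (∀ a b : ℝ, TendstoUniformlyOn (fun k => uk k) u atTop (Set.Icc a b)) →
      ∀ᵐ x : ℝ ∂volume, Tendsto (fun k => Q0 (uk k) x) atTop (nhds (Q0 u x)))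
    (hord : ∀ u v, MemM u → MemM v → (∀ x, u x ≤ v x) → ∀ x, Q0 u x ≤ Q0 v x)
    (htrans : ∀ (c : ℝ) (u : ℝ → ℝ), MemM u →
      ∀ x, Q0 (fun y => u (y - c)) x = Q0 u (x - c))
    (uk : ℕ → ℝ → ℝ) (u : ℝ → ℝ) (huk : ∀ k, MemM (uk k)) (hu : MemM u)
    (hae : ∀ᵐ x : ℝ ∂volume, Tendsto (fun k => uk k x) atTop (nhds (u x)))
    (x : ℝ) (hx : ContinuousAt (Q0 u) x) :
    Tendsto (fun k => Q0 (uk k) x) atTop (nhds (Q0 u x)) :=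
  tendsto_order.2
    ⟨fun _ hc => eventually_lt_apply_of_continuousAt hmap hcont hord htrans huk hu hae hx hc,
      fun _ hc => eventually_apply_lt_of_continuousAt hmap hcont hord htrans huk hu hae hx hc⟩
end

section
/- Let $Q_0:\mathcal{M}\to\mathcal{M}$ satisfy Hypotheses 2. Suppose $\phi\in\mathcal{M}$ and $c\in\mathbb{R}$ satisfy $(Q_0[\phi])(x-c)=\phi(x)$ for all $x$. Then the limits $\phi(-\infty)$ and $\phi(+\infty)$ are fixed points of $Q_0$ restricted to constants, i.e., $Q_0[\phi(-\infty)]=\phi(-\infty)$ and $Q_0[\phi(+\infty)]=\phi(+\infty)$; consequently each of $\phi(\pm\infty)$ belongs to $\{0,\alpha,1\}$. -/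
/-!
Shifting the profile far to the right (left), `φ (· - s)` converges to the constant `φ(+∞)`
(`φ(-∞)`), uniformly on compact intervals because `φ` is monotone. Since `φ` is a fixed point of
`Q₀` up to the shift `c`, continuity of `Q₀` gives `Q₀[φ(±∞)] = φ(±∞)` almost everywhere, and
translation invariance makes `Q₀` of a constant constant, hence this holds everywhere. Bistability
leaves only the fixed points `0`, `α`, `1`.
-/

open MeasureTheory Filter Topology

open Set

lemma MemM.comp_sub_const {φ : ℝ → ℝ} (hφ : MemM φ) (s : ℝ) : MemM (fun x => φ (x - s)) := by
  refine ⟨fun a b hab => hφ.1 (sub_le_sub_right hab s), fun x => ?_, fun x => hφ.2.2 _⟩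
  have hshift : Tendsto (fun y : ℝ => y - s) (𝓝[<] x) (𝓝[<] (x - s)) :=
    tendsto_nhdsWithin_of_tendsto_nhds_of_eventually_within _
      ((continuous_sub_right s).continuousAt.mono_left nhdsWithin_le_nhds)
      (eventually_nhdsWithin_of_forall fun y hy => sub_lt_sub_right hy s)
  exact (hφ.2.1 (x - s)).comp hshift

lemma memM_const {γ : ℝ} (hγ : γ ∈ Icc (0 : ℝ) 1) : MemM (fun _ => γ) :=
  ⟨monotone_const, fun _ => tendsto_const_nhds, fun _ => hγ⟩

lemma MemM.mem_Icc_of_tendsto {φ : ℝ → ℝ} (hφ : MemM φ) {l : Filter ℝ} [l.NeBot] {L : ℝ}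
    (hL : Tendsto φ l (𝓝 L)) : L ∈ Icc (0 : ℝ) 1 :=
  isClosed_Icc.mem_of_tendsto hL (Eventually.of_forall hφ.2.2)

lemma tendstoUniformlyOn_Icc_const_of_monotone {ι : Type*} {l : Filter ι} {f : ι → ℝ → ℝ}
    (hf : ∀ i, Monotone (f i)) {a b L : ℝ} (ha : Tendsto (fun i => f i a) l (𝓝 L))
    (hb : Tendsto (fun i => f i b) l (𝓝 L)) :
    TendstoUniformlyOn f (fun _ => L) l (Icc a b) := by
  rw [Metric.tendstoUniformlyOn_iff]
  intro ε hε
  filter_upwards [Metric.tendsto_nhds.1 ha ε hε, Metric.tendsto_nhds.1 hb ε hε]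
    with i hia hib x hx
  rw [Real.dist_eq, abs_lt] at hia hib ⊢
  have hlo := hf i hx.1
  have hhi := hf i hx.2
  constructor <;> linarith [hia.1, hib.2]

lemma apply_const_eq_of_translation_invariant {Q0 : (ℝ → ℝ) → (ℝ → ℝ)}
    (htrans : ∀ (c : ℝ) (u : ℝ → ℝ), MemM u → ∀ x, Q0 (fun y => u (y - c)) x = Q0 u (x - c))
    {γ : ℝ} (hγ : γ ∈ Icc (0 : ℝ) 1) (x y : ℝ) : Q0 (fun _ => γ) x = Q0 (fun _ => γ) y := by
  simpa using htrans (x - y) (fun _ => γ) (memM_const hγ) x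

lemma apply_const_eq_of_tendsto_shift {Q0 : (ℝ → ℝ) → (ℝ → ℝ)}
    (hcont : ∀ (uk : ℕ → ℝ → ℝ) (u : ℝ → ℝ), (∀ k, MemM (uk k)) → MemM u →
      (∀ a b : ℝ, TendstoUniformlyOn (fun k => uk k) u atTop (Icc a b)) →
      ∀ᵐ x : ℝ ∂volume, Tendsto (fun k => Q0 (uk k) x) atTop (𝓝 (Q0 u x)))
    (htrans : ∀ (c : ℝ) (u : ℝ → ℝ), MemM u → ∀ x, Q0 (fun y => u (y - c)) x = Q0 u (x - c))
    {c : ℝ} {φ : ℝ → ℝ} (hφ : MemM φ) (hfixφ : ∀ x, Q0 φ (x - c) = φ x)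
    {L : ℝ} (hL : L ∈ Icc (0 : ℝ) 1) (s : ℕ → ℝ)
    (hs : ∀ x, Tendsto (fun k => φ (x - s k)) atTop (𝓝 L)) (x : ℝ) :
    Q0 (fun _ => L) x = L := by
  have hunif : ∀ a b : ℝ,
      TendstoUniformlyOn (fun k y => φ (y - s k)) (fun _ => L) atTop (Icc a b) := fun a b =>
    tendstoUniformlyOn_Icc_const_of_monotone (fun k => (hφ.comp_sub_const (s k)).1) (hs a) (hs b)
  have hQ_shift : ∀ k y, Q0 (fun z => φ (z - s k)) y = φ (y + c - s k) := fun k y => by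
    rw [htrans (s k) φ hφ y, ← hfixφ (y + c - s k)]
    ring_nf
  have hae : ∀ᵐ y : ℝ ∂volume, Q0 (fun _ => L) y = L := by
    filter_upwards [hcont _ _ (fun k => hφ.comp_sub_const (s k)) (memM_const hL) hunif]
      with y hy
    refine tendsto_nhds_unique hy ?_
    simpa only [hQ_shift] using hs (y + c)
  obtain ⟨y, hy⟩ := hae.exists
  rw [apply_const_eq_of_translation_invariant htrans hL x y, hy]

lemma mem_zero_alpha_one_of_bistable {Q0 : (ℝ → ℝ) → (ℝ → ℝ)} {α : ℝ}
    (hlow : ∀ γ : ℝ, 0 < γ → γ < α → ∀ x, Q0 (fun _ => γ) x < γ)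
    (hhigh : ∀ γ : ℝ, α < γ → γ < 1 → ∀ x, γ < Q0 (fun _ => γ) x)
    {L : ℝ} (hL : L ∈ Icc (0 : ℝ) 1) (hfixL : Q0 (fun _ => L) 0 = L) :
    L ∈ ({0, α, 1} : Set ℝ) := by
  rcases hL.1.eq_or_lt with rfl | hL0
  · exact Or.inl rfl
  rcases hL.2.lt_or_eq with hL1 | rfl
  · rcases lt_trichotomy L α with hLα | rfl | hαL
    · exact absurd (hlow L hL0 hLα 0) (by rw [hfixL]; exact lt_irrefl L)
    · exact Or.inr (Or.inl rfl)
    · exact absurd (hhigh L hαL hL1 0) (by rw [hfixL]; exact lt_irrefl L)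
  · exact Or.inr (Or.inr rfl)

theorem stmt7_general (Q0 : (ℝ → ℝ) → (ℝ → ℝ)) (α : ℝ)
    -- Hypotheses 2
    (hcont : ∀ (uk : ℕ → ℝ → ℝ) (u : ℝ → ℝ), (∀ k, MemM (uk k)) → MemM u →
      (∀ a b : ℝ, TendstoUniformlyOn (fun k => uk k) u atTop (Set.Icc a b)) →
      ∀ᵐ x : ℝ ∂volume, Tendsto (fun k => Q0 (uk k) x) atTop (nhds (Q0 u x)))
    (htrans : ∀ (c : ℝ) (u : ℝ → ℝ), MemM u →
      ∀ x, Q0 (fun y => u (y - c)) x = Q0 u (x - c))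
    (hlow : ∀ γ : ℝ, 0 < γ → γ < α → ∀ x, Q0 (fun _ => γ) x < γ)
    (hhigh : ∀ γ : ℝ, α < γ → γ < 1 → ∀ x, γ < Q0 (fun _ => γ) x)
    -- a fixed traveling profile
    (c : ℝ) (φ : ℝ → ℝ) (hφ : MemM φ) (hfixφ : ∀ x, Q0 φ (x - c) = φ x)
    (Lm Lp : ℝ) (hLm : Tendsto φ atBot (nhds Lm)) (hLp : Tendsto φ atTop (nhds Lp)) :
    (∀ x, Q0 (fun _ => Lm) x = Lm) ∧ (∀ x, Q0 (fun _ => Lp) x = Lp) ∧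
      Lm ∈ ({0, α, 1} : Set ℝ) ∧ Lp ∈ ({0, α, 1} : Set ℝ) := by
  have hLm01 := hφ.mem_Icc_of_tendsto hLm
  have hLp01 := hφ.mem_Icc_of_tendsto hLp
  have hQLm : ∀ x, Q0 (fun _ => Lm) x = Lm :=
    apply_const_eq_of_tendsto_shift hcont htrans hφ hfixφ hLm01 (fun k => k) fun x =>
      hLm.comp (tendsto_atBot_add_const_left _ x
        (tendsto_neg_atTop_atBot.comp tendsto_natCast_atTop_atTop))
  have hQLp : ∀ x, Q0 (fun _ => Lp) x = Lp :=
    apply_const_eq_of_tendsto_shift hcont htrans hφ hfixφ hLp01 (fun k => -k) fun x => by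
      simpa only [sub_neg_eq_add, Function.comp_def] using
        hLp.comp (tendsto_atTop_add_const_left _ x tendsto_natCast_atTop_atTop)
  exact ⟨hQLm, hQLp, mem_zero_alpha_one_of_bistable hlow hhigh hLm01 (hQLm 0),
    mem_zero_alpha_one_of_bistable hlow hhigh hLp01 (hQLp 0)⟩

theorem stmt7 (Q0 : (ℝ → ℝ) → (ℝ → ℝ)) (α : ℝ)
    -- Hypotheses 2
    (hmap : ∀ u, MemM u → MemM (Q0 u))
    (hcont : ∀ (uk : ℕ → ℝ → ℝ) (u : ℝ → ℝ), (∀ k, MemM (uk k)) → MemM u →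
      (∀ a b : ℝ, TendstoUniformlyOn (fun k => uk k) u atTop (Set.Icc a b)) →
      ∀ᵐ x : ℝ ∂volume, Tendsto (fun k => Q0 (uk k) x) atTop (nhds (Q0 u x)))
    (hord : ∀ u v, MemM u → MemM v → (∀ x, u x ≤ v x) → ∀ x, Q0 u x ≤ Q0 v x)
    (htrans : ∀ (c : ℝ) (u : ℝ → ℝ), MemM u →
      ∀ x, Q0 (fun y => u (y - c)) x = Q0 u (x - c))
    (hα : α ∈ Set.Ioo (0:ℝ) 1)
    (hfix : ∀ x, Q0 (fun _ => α) x = α)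
    (hlow : ∀ γ : ℝ, 0 < γ → γ < α → ∀ x, Q0 (fun _ => γ) x < γ)
    (hhigh : ∀ γ : ℝ, α < γ → γ < 1 → ∀ x, γ < Q0 (fun _ => γ) x)
    -- a fixed traveling profile
    (c : ℝ) (φ : ℝ → ℝ) (hφ : MemM φ) (hfixφ : ∀ x, Q0 φ (x - c) = φ x)
    (Lm Lp : ℝ) (hLm : Tendsto φ atBot (nhds Lm)) (hLp : Tendsto φ atTop (nhds Lp)) :
    (∀ x, Q0 (fun _ => Lm) x = Lm) ∧ (∀ x, Q0 (fun _ => Lp) x = Lp) ∧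
      Lm ∈ ({0, α, 1} : Set ℝ) ∧ Lp ∈ ({0, α, 1} : Set ℝ) :=
  stmt7_general Q0 α hcont htrans hlow hhigh c φ hφ hfixφ Lm Lp hLm hLp
end

section
/- Let $\mu$ be a Borel probability measure on $\mathbb{R}$ with $\mu(\{0\})\ne 1$, and let $\sigma>0$. Then $0<\inf_{\lambda_->0}\frac{\int_{\mathbb{R}}(e^{\lambda_- y}-1)\,d\mu(y)+\sigma}{\lambda_-}+\inf_{\lambda_+>0}\frac{\int_{\mathbb{R}}(e^{-\lambda_+ y}-1)\,d\mu(y)+\sigma}{\lambda_+}$, where the infima are taken in the extended reals $[-\infty,+\infty]$ and the sum is interpreted accordingly (in particular both infima are $>-\infty$). -/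
/-!
The first infimum is bounded below uniformly in `λ`: by dominated convergence
`∫ e^{λ min(y, 0)} dμ → 1` as `λ → 0⁺`, so for small `λ` the numerator
`∫ e^{λy} dμ - 1 + σ` is nonnegative, while for every `λ` it is at least `σ - 1 > -1`, so the
quotient is at least `-1/λ₁` beyond the threshold `λ₁`; the same argument applies to `-y`.

For the sum, write `e^x = 1 + x + r(x)` with `r ≥ 0` and `r(x) ≥ x² / 2` for `x ≥ 0`. The
linear terms cancel in `(e^{λy} - 1)/λ + (e^{-λ'y} - 1)/λ'`, which is therefore at least
`min(λ, λ') y² / 2 ≥ min(λ, λ') min(y², 1) / 2`. Integrating, the sum of the two quotients is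
at least `m q / 2 + σ / m ≥ min(σ, q / 2)` with `m = min(λ, λ')` and `q = ∫ min(y², 1) dμ`,
and `q > 0` exactly because `μ` is not the Dirac mass at `0`.
-/

open MeasureTheory Filter Topology

/-- The quantity `(∫ (e^{s·l·y} - 1) dμ + σ) / l`, valued in the extended reals,
with value `+∞` when the integral is infinite. -/
noncomputable def quot (μ : Measure ℝ) (σ s l : ℝ) : EReal :=
  if ∫⁻ y, ENNReal.ofReal (Real.exp (s * l * y)) ∂μ = ⊤ then ⊤
  else ((((∫⁻ y, ENNReal.ofReal (Real.exp (s * l * y)) ∂μ).toReal - 1 + σ) / l : ℝ) : EReal)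

open Real

lemma EReal.le_iInf_add_iInf {ι κ : Sort*} {f : ι → EReal} {g : κ → EReal} {c : EReal}
    (hf : iInf f ≠ ⊥) (hg : iInf g ≠ ⊥) (h : ∀ i j, c ≤ f i + g j) : c ≤ iInf f + iInf g := by
  refine EReal.le_add_of_forall_gt (.inl hf) (.inr hg) fun a ha b hb => ?_
  obtain ⟨i, hi⟩ := iInf_lt_iff.1 ha
  obtain ⟨j, hj⟩ := iInf_lt_iff.1 hb
  exact (h i j).trans (add_le_add hi.le hj.le)

lemma min_le_div_add_mul {m a b : ℝ} (hm : 0 < m) (ha : 0 ≤ a) (hb : 0 ≤ b) :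
    min a b ≤ a / m + m * b := by
  rcases le_total m 1 with hm1 | hm1
  · have := le_div_self ha hm hm1
    nlinarith [min_le_left a b]
  · have := div_nonneg ha hm.le
    nlinarith [min_le_right a b]

lemma div_min_le_div_add_div {a t u : ℝ} (ha : 0 ≤ a) (ht : 0 < t) (hu : 0 < u) :
    a / min t u ≤ a / t + a / u := by
  have := div_nonneg ha ht.le
  have := div_nonneg ha hu.le
  rcases min_choice t u with h | h <;> rw [h] <;> linarith

lemma le_exp_mul_sub_one_div {t : ℝ} (ht : 0 < t) (y : ℝ) : y ≤ (exp (t * y) - 1) / t := by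
  rw [le_div_iff₀ ht]
  linarith [add_one_le_exp (t * y)]

lemma mul_sq_div_two_le_exp_mul_sub_one_div_sub {t y : ℝ} (ht : 0 < t) (hy : 0 ≤ y) :
    t * y ^ 2 / 2 ≤ (exp (t * y) - 1) / t - y := by
  rw [le_sub_iff_add_le, le_div_iff₀ ht]
  nlinarith [quadratic_le_exp_of_nonneg (mul_nonneg ht.le hy)]

lemma min_mul_sq_div_two_le {t u : ℝ} (ht : 0 < t) (hu : 0 < u) (y : ℝ) :
    min t u * y ^ 2 / 2 ≤ (exp (t * y) - 1) / t + (exp (u * -y) - 1) / u := by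
  rcases le_total 0 y with hy | hy
  · have h₁ := mul_sq_div_two_le_exp_mul_sub_one_div_sub ht hy
    have h₂ := le_exp_mul_sub_one_div hu (-y)
    nlinarith [mul_le_mul_of_nonneg_right (min_le_left t u) (sq_nonneg y)]
  · have h₁ := mul_sq_div_two_le_exp_mul_sub_one_div_sub hu (neg_nonneg.2 hy)
    have h₂ := le_exp_mul_sub_one_div ht y
    nlinarith [mul_le_mul_of_nonneg_right (min_le_right t u) (sq_nonneg y)]

section Integrals

variable {α : Type*} [MeasurableSpace α] {μ : Measure α} {f : α → ℝ}

lemma integral_sub_one_div [IsProbabilityMeasure μ] {g : α → ℝ} (hg : Integrable g μ) (t : ℝ) :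
    ∫ x, (g x - 1) / t ∂μ = (∫ x, g x ∂μ - 1) / t := by
  rw [integral_div, integral_sub hg (integrable_const 1), integral_const, probReal_univ, one_smul]

lemma tendsto_integral_exp_mul_min_zero [IsFiniteMeasure μ] (hf : Measurable f) :
    Tendsto (fun t => ∫ x, exp (t * min (f x) 0) ∂μ) (𝓝[>] 0) (𝓝 (μ.real Set.univ)) := by
  have hlim : ∀ x, Tendsto (fun t => exp (t * min (f x) 0)) (𝓝[>] 0) (𝓝 1) := fun x => by
    have hc : Continuous fun t : ℝ => exp (t * min (f x) 0) := by fun_prop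
    simpa using (hc.tendsto 0).mono_left nhdsWithin_le_nhds
  have := tendsto_integral_filter_of_dominated_convergence (l := 𝓝[>] (0 : ℝ)) (fun _ => (1 : ℝ))
    (Eventually.of_forall fun t =>
      (by fun_prop : Measurable fun x => exp (t * min (f x) 0)).aestronglyMeasurable)
    (eventually_mem_nhdsWithin.mono fun t (ht : 0 < t) => ae_of_all _ fun x => by
      rw [norm_of_nonneg (exp_pos _).le, exp_le_one_iff]
      exact mul_nonpos_of_nonneg_of_nonpos ht.le (min_le_right _ _))
    (integrable_const (μ := μ) 1) (ae_of_all _ hlim)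
  simpa using this

lemma exists_le_integral_exp_mul_sub_one_add_div [IsProbabilityMeasure μ] (hf : Measurable f)
    {σ : ℝ} (hσ : 0 < σ) :
    ∃ c : ℝ, ∀ l > 0, Integrable (fun x => exp (l * f x)) μ →
      c ≤ (∫ x, exp (l * f x) ∂μ - 1 + σ) / l := by
  obtain ⟨l₁, hl₁, h₁⟩ : ∃ l₁ > 0, 1 - σ ≤ ∫ x, exp (l₁ * min (f x) 0) ∂μ := by
    have hlim := tendsto_integral_exp_mul_min_zero (μ := μ) hf
    rw [probReal_univ] at hlim
    have := hlim.eventually (eventually_ge_nhds (sub_lt_self 1 hσ))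
    exact (this.and self_mem_nhdsWithin).exists.imp fun l h => ⟨h.2, h.1⟩
  refine ⟨-1 / l₁, fun l hl hint => ?_⟩
  have hA : 0 ≤ ∫ x, exp (l * f x) ∂μ := integral_nonneg fun x => (exp_pos _).le
  rcases le_or_gt l l₁ with hll | hll
  · have hmono : ∀ x, l₁ * min (f x) 0 ≤ l * f x := fun x =>
      (mul_le_mul_of_nonpos_right hll (min_le_right _ _)).trans
        (mul_le_mul_of_nonneg_left (min_le_left _ _) hl.le)
    have : 1 - σ ≤ ∫ x, exp (l * f x) ∂μ := h₁.trans <| integral_mono_of_nonneg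
      (ae_of_all _ fun x => (exp_pos _).le) hint (ae_of_all _ fun x => exp_le_exp.2 (hmono x))
    calc -1 / l₁ ≤ 0 := div_nonpos_of_nonpos_of_nonneg (by norm_num) hl₁.le
      _ ≤ _ := div_nonneg (by linarith) hl.le
  · calc -1 / l₁ ≤ -1 / l := by
          rw [neg_div, neg_div]; exact neg_le_neg (one_div_le_one_div_of_le hl₁ hll.le)
      _ ≤ _ := div_le_div_of_nonneg_right (by linarith) hl.le

lemma exists_pos_le_integral_exp_mul_add_integral_exp_mul_neg [IsProbabilityMeasure μ]
    (hf : Measurable f) (hf0 : μ {x | f x ≠ 0} ≠ 0) {σ : ℝ} (hσ : 0 < σ) :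
    ∃ ε > 0, ∀ t > 0, ∀ u > 0, Integrable (fun x => exp (t * f x)) μ →
      Integrable (fun x => exp (u * -f x)) μ →
      ε ≤ (∫ x, exp (t * f x) ∂μ - 1 + σ) / t + (∫ x, exp (u * -f x) ∂μ - 1 + σ) / u := by
  set q := ∫ x, min (f x ^ 2) 1 ∂μ
  have hq_int : Integrable (fun x => min (f x ^ 2) 1) μ :=
    (integrable_const 1).mono' (by fun_prop : Measurable _).aestronglyMeasurable
      (ae_of_all _ fun x => by
        rw [norm_of_nonneg (le_min (sq_nonneg _) zero_le_one)]; exact min_le_right _ _)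
  have hq : 0 < q := by
    rw [integral_pos_iff_support_of_nonneg (fun x => le_min (sq_nonneg _) zero_le_one) hq_int]
    convert pos_iff_ne_zero.2 hf0 using 3
    ext x
    rcases eq_or_ne (f x) 0 with h | h
    · simp [h]
    · simpa [h] using (lt_min (pow_pos (abs_pos.2 h) 2) one_pos).ne'
  refine ⟨min σ (q / 2), by positivity, fun t ht u hu hA hB => ?_⟩
  have hA' : Integrable (fun x => (exp (t * f x) - 1) / t) μ :=
    (hA.sub (integrable_const 1)).div_const t
  have hB' : Integrable (fun x => (exp (u * -f x) - 1) / u) μ :=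
    (hB.sub (integrable_const 1)).div_const u
  have hpair : min t u * (q / 2) ≤
      (∫ x, exp (t * f x) ∂μ - 1) / t + (∫ x, exp (u * -f x) ∂μ - 1) / u := by
    calc min t u * (q / 2) = ∫ x, min t u * min (f x ^ 2) 1 / 2 ∂μ := by
          rw [integral_div, integral_const_mul]; ring
      _ ≤ ∫ x, ((exp (t * f x) - 1) / t + (exp (u * -f x) - 1) / u) ∂μ := by
          refine integral_mono ((hq_int.const_mul _).div_const _) (hA'.add hB') fun x => ?_
          refine le_trans ?_ (min_mul_sq_div_two_le ht hu (f x))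
          gcongr
          exact min_le_left _ _
      _ = _ := by
          rw [integral_add hA' hB', integral_sub_one_div hA, integral_sub_one_div hB]
  have := min_le_div_add_mul (lt_min ht hu) hσ.le (half_pos hq).le
  have := div_min_le_div_add_div hσ.le ht hu
  rw [add_div, add_div]
  linarith

end Integrals

lemma quot_eq_top_or (μ : Measure ℝ) (σ s l : ℝ) :
    quot μ σ s l = ⊤ ∨ Integrable (fun y => exp (s * l * y)) μ ∧
      quot μ σ s l = ((∫ y, exp (s * l * y) ∂μ - 1 + σ) / l : ℝ) := by
  have hm : AEStronglyMeasurable (fun y => exp (s * l * y)) μ := by fun_prop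
  have hnn : 0 ≤ᵐ[μ] fun y => exp (s * l * y) := ae_of_all _ fun y => (exp_pos _).le
  unfold quot
  split_ifs with h
  · exact .inl rfl
  · exact .inr ⟨(lintegral_ofReal_ne_top_iff_integrable hm hnn).1 h,
      by rw [← integral_eq_lintegral_of_nonneg_ae hnn hm]⟩

lemma quot_ne_bot (μ : Measure ℝ) (σ s l : ℝ) : quot μ σ s l ≠ ⊥ := by
  rcases quot_eq_top_or μ σ s l with h | ⟨-, h⟩ <;> simp [h]

lemma exists_coe_le_quot (μ : Measure ℝ) [IsProbabilityMeasure μ] {σ : ℝ} (hσ : 0 < σ) (s : ℝ) :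
    ∃ c : ℝ, ∀ l > 0, (c : EReal) ≤ quot μ σ s l := by
  obtain ⟨c, hc⟩ := exists_le_integral_exp_mul_sub_one_add_div (μ := μ)
    (f := fun y => s * y) (by fun_prop) hσ
  refine ⟨c, fun l hl => ?_⟩
  have hexp : (fun y => exp (s * l * y)) = fun y => exp (l * (s * y)) := by
    ext y; ring_nf
  rcases quot_eq_top_or μ σ s l with h | ⟨hint, h⟩
  · simp [h]
  · rw [h, EReal.coe_le_coe_iff, hexp]
    exact hc l hl (hexp ▸ hint)

lemma exists_pos_le_quot_add_quot (μ : Measure ℝ) [IsProbabilityMeasure μ]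
    (hμ0 : μ {0} ≠ 1) {σ : ℝ} (hσ : 0 < σ) :
    ∃ ε : ℝ, 0 < ε ∧ ∀ l > 0, ∀ l' > 0, (ε : EReal) ≤ quot μ σ 1 l + quot μ σ (-1) l' := by
  have hsupp : μ {y : ℝ | y ≠ 0} ≠ 0 := by
    rwa [Ne, ← Set.compl_singleton_eq, prob_compl_eq_zero_iff (measurableSet_singleton 0)]
  obtain ⟨ε, hε, h⟩ :=
    exists_pos_le_integral_exp_mul_add_integral_exp_mul_neg (f := fun y => y) measurable_id hsupp hσ
  refine ⟨ε, hε, fun l hl l' hl' => ?_⟩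
  rcases quot_eq_top_or μ σ 1 l with h₁ | ⟨hA, h₁⟩
  · simp [h₁, EReal.top_add_of_ne_bot (quot_ne_bot μ σ (-1) l')]
  rcases quot_eq_top_or μ σ (-1) l' with h₂ | ⟨hB, h₂⟩
  · simp [h₂, EReal.add_top_of_ne_bot (quot_ne_bot μ σ 1 l)]
  simp only [one_mul, neg_mul_comm] at hA hB h₁ h₂
  rw [h₁, h₂, ← EReal.coe_add, EReal.coe_le_coe_iff]
  exact h l hl l' hl' hA hB

theorem stmt12 (μ : Measure ℝ) [IsProbabilityMeasure μ]
    (hμ0 : μ ({0} : Set ℝ) ≠ 1) (σ : ℝ) (hσ : 0 < σ) :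
    (⨅ l : {l : ℝ // 0 < l}, quot μ σ 1 l) ≠ ⊥ ∧
    (⨅ l : {l : ℝ // 0 < l}, quot μ σ (-1) l) ≠ ⊥ ∧
    (0 : EReal) < (⨅ l : {l : ℝ // 0 < l}, quot μ σ 1 l) +
      ⨅ l : {l : ℝ // 0 < l}, quot μ σ (-1) l := by
  have iInf_ne_bot : ∀ s, (⨅ l : {l : ℝ // 0 < l}, quot μ σ s l) ≠ ⊥ := fun s => by
    obtain ⟨c, hc⟩ := exists_coe_le_quot μ hσ s
    exact ne_bot_of_le_ne_bot (EReal.coe_ne_bot c) (le_iInf fun l => hc l l.2)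
  obtain ⟨ε, hε, h⟩ := exists_pos_le_quot_add_quot μ hμ0 hσ
  refine ⟨iInf_ne_bot 1, iInf_ne_bot (-1), ?_⟩
  calc (0 : EReal) < (ε : ℝ) := EReal.coe_pos.2 hε
    _ ≤ _ := EReal.le_iInf_add_iInf (iInf_ne_bot 1) (iInf_ne_bot (-1)) fun l l' => h l l.2 l' l'.2
end

section
/- Let $\mu$ be a Borel probability measure on $\mathbb{R}$, $\hat f$ a Lipschitz continuous function on $\mathbb{R}$ satisfying $\hat f>0$ on $(-\infty,0)$, $\hat f=f$ on $[0,1]$, $\hat f<0$ on $(1,\infty)$, where $f$ is the bistable nonlinearity ($f(0)=f(\alpha)=f(1)=0$, $f<0$ on $(0,\alpha)$, $f>0$ on $(\alpha,1)$, $\alpha\in(0,1)$). Let $\rho\in C^1(\mathbb{R})$ satisfy $\rho=0$ on $(-\infty,0]$, $\rho=1$ on $[1,\infty)$, $\rho'>0$ on $(0,1)$. Then for all sufficiently small $\varepsilon>0$, the function $\underline u(t,x):=\rho(\varepsilon x-\tfrac{t}{\varepsilon})-\tfrac{1-\alpha}{4}$ satisfies the subsolution inequality $\underline u_t\le\mu*\underline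 u-\underline u+\hat f(\underline u)$ for all $t,x\in\mathbb{R}$, and $\overline u(t,x):=\rho(\varepsilon x+\tfrac{t}{\varepsilon}+1)+\tfrac{\alpha}{4}$ satisfies the supersolution inequality $\overline u_t\ge\mu*\overline u-\overline u+\hat f(\overline u)$ for all $t,x\in\mathbb{R}$. -/
open MeasureTheory Filter Topology Set

/-! The nonlocal term `∫ ρ (z - ε y) dμ(y) - ρ z` tends to `0` uniformly in `z` as `ε → 0`: since
`ρ` is Lipschitz with values in `[0, 1]`, it is dominated by `∫ min 1 (K |ε y|) dμ(y)`, which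
vanishes in the limit by dominated convergence. On the other hand, with `g` the reaction term
evaluated along the front (`g v = fh (v - (1 - α)/4)`, resp. `g v = -fh (v + α/4)`), the continuous
function `max (ρ' z) (g (ρ z))` is positive and constant off `[0, 1]`, hence bounded below by some
`m > 0`. Where `ρ' z ≥ m`, the time derivative `ρ' z / ε` dominates everything else once `ε` is
small; elsewhere `g (ρ z) ≥ m` beats the nonlocal error. -/

theorem exists_forall_le_of_eqOn_Iic_of_eqOn_Ici {φ : ℝ → ℝ} {a b : ℝ} (hab : a ≤ b)
    (hφ : ContinuousOn φ (Icc a b)) (ha : ∀ z ≤ a, φ z = φ a) (hb : ∀ z ≥ b, φ z = φ b) :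
    ∃ w, ∀ z, φ w ≤ φ z := by
  obtain ⟨w, -, hmin⟩ := isCompact_Icc.exists_isMinOn (nonempty_Icc.2 hab) hφ
  refine ⟨w, fun z => ?_⟩
  rcases le_or_gt z a with hza | hza
  · exact ha z hza ▸ hmin ⟨le_rfl, hab⟩
  rcases le_or_gt b z with hbz | hbz
  · exact hb z hbz ▸ hmin ⟨hab, le_rfl⟩
  · exact hmin ⟨hza.le, hbz.le⟩

theorem eventually_le_div_add {p q : ℝ → ℝ} {m B : ℝ} (hp : ∀ z, 0 ≤ p z)
    (hm : ∀ z, m ≤ max (p z) (q z)) (hB : ∀ z, B ≤ q z) (hm0 : 0 < m) :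
    ∀ᶠ ε in 𝓝[>] 0, ∀ z, m ≤ p z / ε + q z := by
  have hsmall : ∀ᶠ ε in 𝓝[>] (0 : ℝ), ε * (m - B) < m := by
    have : Tendsto (fun ε : ℝ => ε * (m - B)) (𝓝 0) (𝓝 0) := by
      simpa using (tendsto_id (x := 𝓝 (0 : ℝ))).mul_const (m - B)
    exact (this.eventually (gt_mem_nhds hm0)).filter_mono nhdsWithin_le_nhds
  filter_upwards [hsmall, self_mem_nhdsWithin] with ε hε (hε0 : 0 < ε) z
  rcases le_max_iff.1 (hm z) with hpz | hqz
  · have : m - B ≤ p z / ε := by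
      rw [le_div_iff₀ hε0]; nlinarith
    linarith [hB z]
  · linarith [div_nonneg (hp z) hε0.le]

theorem tendstoUniformly_integral_comp_sub_mul (μ : Measure ℝ) [IsProbabilityMeasure μ]
    {g : ℝ → ℝ} {K : NNReal} {C : ℝ} (hg : LipschitzWith K g) (hC : ∀ a b, dist (g a) (g b) ≤ C) :
    TendstoUniformly (fun ε z => ∫ y, g (z - ε * y) ∂μ) g (𝓝 0) := by
  have hC0 : 0 ≤ C := (dist_self (g 0)).symm.trans_le (hC 0 0)
  let bound (ε y : ℝ) : ℝ := min C (K * |ε * y|)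
  have hbound_le (ε z y : ℝ) : ‖g (z - ε * y) - g z‖ ≤ bound ε y :=
    le_min (by simpa [← dist_eq_norm] using hC (z - ε * y) z)
      (by simpa [← dist_eq_norm] using hg.dist_le_mul (z - ε * y) z)
  have hbound_norm (ε y : ℝ) : ‖bound ε y‖ ≤ C := by
    rw [Real.norm_of_nonneg (le_min hC0 (by positivity))]
    exact min_le_left _ _
  have hbound_int (ε : ℝ) : Integrable (bound ε) μ :=
    .of_bound (by fun_prop : Continuous (bound ε)).aestronglyMeasurable C
      (Eventually.of_forall (hbound_norm ε))
  have hbound_lim : Tendsto (fun ε => ∫ y, bound ε y ∂μ) (𝓝 0) (𝓝 0) := by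
    have := tendsto_integral_filter_of_dominated_convergence (fun _ => C)
      (Eventually.of_forall fun ε => (hbound_int ε).aestronglyMeasurable)
      (Eventually.of_forall fun ε => Eventually.of_forall (hbound_norm ε))
      (integrable_const C)
      (Eventually.of_forall fun y => ((by fun_prop : Continuous fun ε => bound ε y)).tendsto 0)
    simpa [bound, hC0] using this
  rw [Metric.tendstoUniformly_iff]
  intro d hd
  filter_upwards [hbound_lim.eventually (gt_mem_nhds hd)] with ε hε z
  have hint : Integrable (fun y => g (z - ε * y) - g z) μ :=
    .mono' (hbound_int ε)
      ((hg.continuous.comp (by fun_prop)).sub continuous_const).aestronglyMeasurable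
      (Eventually.of_forall (hbound_le ε z))
  have hint' : Integrable (fun y => g (z - ε * y)) μ :=
    (hint.add (integrable_const (g z))).congr (.of_forall fun y => sub_add_cancel _ _)
  calc dist (g z) (∫ y, g (z - ε * y) ∂μ)
      = ‖∫ y, (g (z - ε * y) - g z) ∂μ‖ := by
        rw [dist_comm, dist_eq_norm, integral_sub hint' (integrable_const _), integral_const,
          probReal_univ, one_smul]
    _ ≤ ∫ y, bound ε y ∂μ := norm_integral_le_of_norm_le (hbound_int ε) (.of_forall (hbound_le ε z))
    _ < d := hε

structure IsTransitionProfile (ρ ρ' : ℝ → ℝ) : Prop where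
  hasDerivAt : ∀ z, HasDerivAt ρ (ρ' z) z
  continuous_deriv : Continuous ρ'
  eq_zero : ∀ z ≤ (0 : ℝ), ρ z = 0
  eq_one : ∀ z ≥ (1 : ℝ), ρ z = 1
  deriv_pos : ∀ z ∈ Ioo (0 : ℝ) 1, 0 < ρ' z

namespace IsTransitionProfile

variable {ρ ρ' : ℝ → ℝ}

theorem continuous (hP : IsTransitionProfile ρ ρ') : Continuous ρ :=
  continuous_iff_continuousAt.2 fun z => (hP.hasDerivAt z).continuousAt

theorem deriv_eq_zero_of_nonpos (hP : IsTransitionProfile ρ ρ') {z : ℝ} (hz : z ≤ 0) : ρ' z = 0 :=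
  (uniqueDiffOn_Iic 0 z hz).eq_deriv _ (hP.hasDerivAt z).hasDerivWithinAt
    ((hasDerivWithinAt_const z _ 0).congr (fun w hw => hP.eq_zero w hw) (hP.eq_zero z hz))

theorem deriv_eq_zero_of_one_le (hP : IsTransitionProfile ρ ρ') {z : ℝ} (hz : 1 ≤ z) : ρ' z = 0 :=
  (uniqueDiffOn_Ici 1 z hz).eq_deriv _ (hP.hasDerivAt z).hasDerivWithinAt
    ((hasDerivWithinAt_const z _ 1).congr (fun w hw => hP.eq_one w hw) (hP.eq_one z hz))

theorem deriv_nonneg (hP : IsTransitionProfile ρ ρ') (z : ℝ) : 0 ≤ ρ' z := by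
  rcases le_or_gt z 0 with h0 | h0
  · exact (hP.deriv_eq_zero_of_nonpos h0).ge
  rcases le_or_gt 1 z with h1 | h1
  · exact (hP.deriv_eq_zero_of_one_le h1).ge
  · exact (hP.deriv_pos z ⟨h0, h1⟩).le

theorem mem_Icc (hP : IsTransitionProfile ρ ρ') (z : ℝ) : ρ z ∈ Icc (0 : ℝ) 1 := by
  have hmono : Monotone ρ := monotone_of_hasDerivAt_nonneg hP.hasDerivAt hP.deriv_nonneg
  exact ⟨hP.eq_zero _ (min_le_right z 0) ▸ hmono (min_le_left z 0),
    hP.eq_one _ (le_max_right z 1) ▸ hmono (le_max_left z 1)⟩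

theorem exists_forall_le_comp (hP : IsTransitionProfile ρ ρ') {F : ℝ × ℝ → ℝ} (hF : Continuous F) :
    ∃ w, ∀ z, F (ρ' w, ρ w) ≤ F (ρ' z, ρ z) :=
  exists_forall_le_of_eqOn_Iic_of_eqOn_Ici zero_le_one
    (hF.comp (hP.continuous_deriv.prodMk hP.continuous)).continuousOn
    (fun z hz => by simp [hP.deriv_eq_zero_of_nonpos hz, hP.deriv_eq_zero_of_nonpos le_rfl,
      hP.eq_zero z hz, hP.eq_zero 0 le_rfl])
    (fun z hz => by simp [hP.deriv_eq_zero_of_one_le hz, hP.deriv_eq_zero_of_one_le le_rfl,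
      hP.eq_one z hz, hP.eq_one 1 le_rfl])

theorem exists_lipschitzWith (hP : IsTransitionProfile ρ ρ') : ∃ K, LipschitzWith K ρ := by
  obtain ⟨w, hw⟩ := hP.exists_forall_le_comp (F := fun p => -p.1) continuous_fst.neg
  refine ⟨(ρ' w).toNNReal, lipschitzWith_of_nnnorm_deriv_le
    (fun z => (hP.hasDerivAt z).differentiableAt) fun z => ?_⟩
  rw [(hP.hasDerivAt z).deriv, ← NNReal.coe_le_coe, coe_nnnorm,
    Real.norm_of_nonneg (hP.deriv_nonneg z), Real.coe_toNNReal _ (hP.deriv_nonneg w)]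
  simpa using hw z

theorem tendstoUniformly_integral (hP : IsTransitionProfile ρ ρ') (μ : Measure ℝ)
    [IsProbabilityMeasure μ] :
    TendstoUniformly (fun ε z => ∫ y, ρ (z - ε * y) ∂μ) ρ (𝓝 0) :=
  have ⟨_, hK⟩ := hP.exists_lipschitzWith
  tendstoUniformly_integral_comp_sub_mul μ hK fun a b =>
    Real.dist_le_of_mem_Icc_01 (hP.mem_Icc a) (hP.mem_Icc b)

theorem eventually_abs_integral_sub_le (hP : IsTransitionProfile ρ ρ') (μ : Measure ℝ)
    [IsProbabilityMeasure μ] {g : ℝ → ℝ}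
    (hg : Continuous g) (hg0 : 0 < g 0) (hg1 : 0 < g 1) :
    ∀ᶠ ε in 𝓝[>] 0, ∀ z, |∫ y, ρ (z - ε * y) ∂μ - ρ z| ≤ ρ' z / ε + g (ρ z) := by
  obtain ⟨w, hw⟩ := hP.exists_forall_le_comp (F := fun p => max p.1 (g p.2)) (by fun_prop)
  obtain ⟨v, hv⟩ := hP.exists_forall_le_comp (F := fun p => g p.2) (by fun_prop)
  have hpos : 0 < max (ρ' w) (g (ρ w)) := by
    rcases le_or_gt w 0 with h0 | h0
    · exact lt_max_of_lt_right (hP.eq_zero w h0 ▸ hg0)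
    rcases le_or_gt 1 w with h1 | h1
    · exact lt_max_of_lt_right (hP.eq_one w h1 ▸ hg1)
    · exact lt_max_of_lt_left (hP.deriv_pos w ⟨h0, h1⟩)
  filter_upwards [eventually_le_div_add hP.deriv_nonneg hw hv hpos,
    (Metric.tendstoUniformly_iff.1 (hP.tendstoUniformly_integral μ) _ hpos).filter_mono
      nhdsWithin_le_nhds] with ε hfront hconv z
  rw [← Real.dist_eq, dist_comm]
  exact (hconv z).le.trans (hfront z)

theorem integrable_comp (hP : IsTransitionProfile ρ ρ') (μ : Measure ℝ) [IsFiniteMeasure μ]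
    (a b : ℝ) :
    Integrable (fun y => ρ (a - b * y)) μ :=
  .of_bound (hP.continuous.comp (by fun_prop)).aestronglyMeasurable 1 <| .of_forall fun y => by
    rw [Real.norm_of_nonneg (hP.mem_Icc _).1]
    exact (hP.mem_Icc _).2

end IsTransitionProfile

theorem stmt15_general (μ : Measure ℝ) [IsProbabilityMeasure μ]
    (α : ℝ) (hα : α ∈ Set.Ioo (0:ℝ) 1)
    (f : ℝ → ℝ)
    (hfneg : ∀ u ∈ Set.Ioo 0 α, f u < 0) (hfpos : ∀ u ∈ Set.Ioo α 1, 0 < f u)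
    (fh : ℝ → ℝ) (Kfh : NNReal) (hfh : LipschitzWith Kfh fh)
    (hfhpos : ∀ u < (0:ℝ), 0 < fh u) (hfheq : ∀ u ∈ Set.Icc (0:ℝ) 1, fh u = f u)
    (hfhneg : ∀ u > (1:ℝ), fh u < 0)
    (ρ ρd : ℝ → ℝ) (hρ : ∀ z, HasDerivAt ρ (ρd z) z) (hρd : Continuous ρd)
    (hρ0 : ∀ z ≤ (0:ℝ), ρ z = 0) (hρ1 : ∀ z ≥ (1:ℝ), ρ z = 1)
    (hρd' : ∀ z ∈ Set.Ioo (0:ℝ) 1, 0 < ρd z) :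
    ∃ ε₀ > 0, ∀ ε : ℝ, 0 < ε → ε < ε₀ →
      -- `u(t,x) = ρ(εx - t/ε) - (1-α)/4` is a subsolution of `u_t = μ*u - u + fh(u)`
      (∀ t x : ℝ,
        -(1/ε) * ρd (ε * x - t / ε) ≤
          (∫ y, (ρ (ε * (x - y) - t / ε) - (1 - α) / 4) ∂μ)
            - (ρ (ε * x - t / ε) - (1 - α) / 4)
            + fh (ρ (ε * x - t / ε) - (1 - α) / 4)) ∧
      -- `u(t,x) = ρ(εx + t/ε + 1) + α/4` is a supersolution
      (∀ t x : ℝ,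
        (∫ y, (ρ (ε * (x - y) + t / ε + 1) + α / 4) ∂μ)
            - (ρ (ε * x + t / ε + 1) + α / 4)
            + fh (ρ (ε * x + t / ε + 1) + α / 4) ≤
          (1/ε) * ρd (ε * x + t / ε + 1)) := by
  obtain ⟨hα0, hα1⟩ := hα
  have hP : IsTransitionProfile ρ ρd := ⟨hρ, hρd, hρ0, hρ1, hρd'⟩
  have hsub := hP.eventually_abs_integral_sub_le μ (g := fun v => fh (v - (1 - α) / 4))
    (hfh.continuous.comp (by fun_prop)) (hfhpos _ (by linarith)) <| by
      rw [hfheq _ ⟨by linarith, by linarith⟩]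
      exact hfpos _ ⟨by linarith, by linarith⟩
  have hsuper := hP.eventually_abs_integral_sub_le μ (g := fun v => -fh (v + α / 4))
    (hfh.continuous.comp (by fun_prop)).neg
    (by rw [neg_pos, hfheq _ ⟨by linarith, by linarith⟩]; exact hfneg _ ⟨by linarith, by linarith⟩)
    (neg_pos.2 (hfhneg _ (by linarith)))
  obtain ⟨ε₀, hε₀, hε⟩ := (nhdsGT_basis 0).eventually_iff.1 (hsub.and hsuper)
  refine ⟨ε₀, hε₀, fun ε hε0 hεε₀ => ?_⟩
  obtain ⟨hsub, hsuper⟩ := hε ⟨hε0, hεε₀⟩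
  refine ⟨fun t x => ?_, fun t x => ?_⟩
  · simp_rw [show ∀ y, ε * (x - y) - t / ε = ε * x - t / ε - ε * y from fun y => by ring]
    rw [integral_sub (hP.integrable_comp μ _ _) (integrable_const _), integral_const,
      probReal_univ, one_smul, neg_mul, one_div_mul_eq_div]
    linarith [abs_le.1 (hsub (ε * x - t / ε))]
  · simp_rw [show ∀ y, ε * (x - y) + t / ε + 1 = ε * x + t / ε + 1 - ε * y from fun y => by ring]
    rw [integral_add (hP.integrable_comp μ _ _) (integrable_const _), integral_const,
      probReal_univ, one_smul, one_div_mul_eq_div]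
    linarith [abs_le.1 (hsuper (ε * x + t / ε + 1))]

theorem stmt15 (μ : Measure ℝ) [IsProbabilityMeasure μ]
    (α : ℝ) (hα : α ∈ Set.Ioo (0:ℝ) 1)
    (f : ℝ → ℝ) (Kf : NNReal) (hf : LipschitzWith Kf f)
    (hf0 : f 0 = 0) (hfα : f α = 0) (hf1 : f 1 = 0)
    (hfneg : ∀ u ∈ Set.Ioo 0 α, f u < 0) (hfpos : ∀ u ∈ Set.Ioo α 1, 0 < f u)
    (fh : ℝ → ℝ) (Kfh : NNReal) (hfh : LipschitzWith Kfh fh)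
    (hfhpos : ∀ u < (0:ℝ), 0 < fh u) (hfheq : ∀ u ∈ Set.Icc (0:ℝ) 1, fh u = f u)
    (hfhneg : ∀ u > (1:ℝ), fh u < 0)
    (ρ ρd : ℝ → ℝ) (hρ : ∀ z, HasDerivAt ρ (ρd z) z) (hρd : Continuous ρd)
    (hρ0 : ∀ z ≤ (0:ℝ), ρ z = 0) (hρ1 : ∀ z ≥ (1:ℝ), ρ z = 1)
    (hρd' : ∀ z ∈ Set.Ioo (0:ℝ) 1, 0 < ρd z) :
    ∃ ε₀ > 0, ∀ ε : ℝ, 0 < ε → ε < ε₀ →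
      -- `u(t,x) = ρ(εx - t/ε) - (1-α)/4` is a subsolution of `u_t = μ*u - u + fh(u)`
      (∀ t x : ℝ,
        -(1/ε) * ρd (ε * x - t / ε) ≤
          (∫ y, (ρ (ε * (x - y) - t / ε) - (1 - α) / 4) ∂μ)
            - (ρ (ε * x - t / ε) - (1 - α) / 4)
            + fh (ρ (ε * x - t / ε) - (1 - α) / 4)) ∧
      -- `u(t,x) = ρ(εx + t/ε + 1) + α/4` is a supersolution
      (∀ t x : ℝ,
        (∫ y, (ρ (ε * (x - y) + t / ε + 1) + α / 4) ∂μ)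
            - (ρ (ε * x + t / ε + 1) + α / 4)
            + fh (ρ (ε * x + t / ε + 1) + α / 4) ≤
          (1/ε) * ρd (ε * x + t / ε + 1)) :=
  stmt15_general μ α hα f hfneg hfpos fh Kfh hfh hfhpos hfheq hfhneg ρ ρd hρ hρd hρ0 hρ1 hρd'
end
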